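/- arXiv:2407.00546 — 6 statements merged into one kernel-verified Lean document; each statement's English description precedes it below -/
import Mathlib

section
/- Let S = k[X_1,X_2,Y_1,Y_2] over a field k and let α ≤ β ≤ γ be positive integers. Then the complex 0 → S → S^4 → S^4 → S → 0 with differentials ∂_1 = (X_1^αY_1^α, X_1^αY_2^α, X_2^βY_1^β, X_2^γY_2^γ), ∂_2 the 4×4 matrix with columns (Y_2^α, −Y_1^α, 0, 0), (0, 0, X_2^{γ−β}Y_2^γ, −Y_1^β), (−X_2^βY_1^{β−α}, 0, X_1^α, 0), (0, −X_2^γY_2^{γ−α}, 0, X_1^α), and ∂_3 = (−X_2^γY_1^{β−α}Y_2^{γ−α}, X_1^α, −X_2^{γ−β}Y_2^γ, Y_1^β)^T, is exact in positive degrees with H_0 = S/(X_1^αY_1^α, X_1^αY_2^α, X_2^βY_1^β, X_2^γY_2^γ); i.e., it is a free resolution of S/J for J = (X_1^αY_1^α, X_1^αY_2^α, X_2^βY_1^β, X_2^γY_2^γ). -/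
open MvPolynomial

noncomputable section SquareAux

variable {k : Type} [Field k] {σ : Type} [DecidableEq σ]

def phiAux (v : σ) :
    MvPolynomial σ k ≃ₐ[k] Polynomial (MvPolynomial {w : σ // w ≠ v} k) :=
  (renameEquiv k (Equiv.optionSubtypeNe v).symm).trans (optionEquivLeft k _)

lemma phiAux_X_self (v : σ) :
    phiAux (k := k) v (X v) = Polynomial.X := by
  simp [phiAux, Equiv.optionSubtypeNe_symm_self, optionEquivLeft_X_none]

lemma phiAux_X_ne {v w : σ} (h : w ≠ v) :
    phiAux (k := k) v (X w) = Polynomial.C (X ⟨w, h⟩) := by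
  simp [phiAux, Equiv.optionSubtypeNe_symm_of_ne h, optionEquivLeft_X_some]

lemma prime_X_aux (v : σ) : Prime (X v : MvPolynomial σ k) := by
  rw [← MulEquiv.prime_iff (phiAux (k := k) v).toMulEquiv]
  have : (phiAux (k := k) v).toMulEquiv (X v) = Polynomial.X := phiAux_X_self v
  rw [this]
  exact Polynomial.prime_X

lemma not_X_dvd_aux (v : σ) {m : MvPolynomial σ k}
    (h : eval (fun w => if w = v then (0 : k) else 1) m = 1) : ¬ X v ∣ m := by
  rintro ⟨q, rfl⟩
  rw [map_mul, eval_X, if_pos rfl, zero_mul] at h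
  exact zero_ne_one h

lemma split_eq_aux (v : σ) (n : ℕ) {m w u : MvPolynomial σ k}
    (hnd : ¬ X v ∣ m) (h : X v ^ n * w = m * u) :
    ∃ t, u = X v ^ n * t ∧ w = m * t := by
  have hdvd : (X v : MvPolynomial σ k) ^ n ∣ m * u := ⟨w, h.symm⟩
  obtain ⟨t, ht⟩ := (prime_X_aux v).pow_dvd_of_dvd_mul_left n hnd hdvd
  refine ⟨t, ht, ?_⟩
  have hx : (X v : MvPolynomial σ k) ^ n ≠ 0 := pow_ne_zero _ (X_ne_zero v)
  apply mul_left_cancel₀ hx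
  rw [h, ht]; ring

lemma span_step_aux (v : σ) (n : ℕ) {A B p q w : MvPolynomial σ k}
    {a b : MvPolynomial {w : σ // w ≠ v} k}
    (hA : phiAux (k := k) v A = Polynomial.C a) (hB : phiAux (k := k) v B = Polynomial.C b)
    (h : X v ^ n * w = p * A + q * B) :
    ∃ p' q', w = p' * A + q' * B := by
  have h' : Polynomial.X ^ n * (phiAux (k := k) v) w =
      (phiAux (k := k) v) p * Polynomial.C a + (phiAux (k := k) v) q * Polynomial.C b := by
    have := congrArg (phiAux (k := k) v) h
    simpa [map_add, map_mul, map_pow, phiAux_X_self, hA, hB] using this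
  have hmem : (phiAux (k := k) v) w ∈
      Ideal.map (Polynomial.C (R := MvPolynomial {w : σ // w ≠ v} k)) (Ideal.span {a, b}) := by
    rw [Ideal.mem_map_C_iff]
    intro i
    have hc := congrArg (fun f => Polynomial.coeff f (i + n)) h'
    simp only [Polynomial.coeff_add, Polynomial.coeff_mul_C, Polynomial.coeff_X_pow_mul] at hc
    rw [hc]
    exact Ideal.add_mem _
      (Ideal.mul_mem_left _ _ (Ideal.subset_span (by simp)))
      (Ideal.mul_mem_left _ _ (Ideal.subset_span (by simp)))
  rw [Ideal.map_span, Set.image_insert_eq, Set.image_singleton] at hmem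
  obtain ⟨P, Q, hPQ⟩ := Ideal.mem_span_pair.mp hmem
  refine ⟨(phiAux (k := k) v).symm P, (phiAux (k := k) v).symm Q, (phiAux (k := k) v).injective ?_⟩
  rw [map_add, map_mul, map_mul, AlgEquiv.apply_symm_apply, AlgEquiv.apply_symm_apply, hA, hB,
    hPQ]

end SquareAux

/-- The explicit cellular complex `0 → S → S⁴ → S⁴ → S → 0` supported on the labeled square is a
free resolution of `S/J` for `J = (X₁^αY₁^α, X₁^αY₂^α, X₂^βY₁^β, X₂^γY₂^γ)` with `α ≤ β ≤ γ`:
it is exact in positive degrees (the leftmost map is injective) and `H₀ = S/J`. -/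
theorem square_resolution (k : Type) [Field k] (α β γ : ℕ)
    (hα : 0 < α) (hαβ : α ≤ β) (hβγ : β ≤ γ) :
    let S := MvPolynomial (Fin 2 ⊕ Fin 2) k
    let x : Fin 2 → S := fun i => X (Sum.inl i)
    let y : Fin 2 → S := fun j => X (Sum.inr j)
    let g : Fin 4 → S :=
      ![x 0 ^ α * y 0 ^ α, x 0 ^ α * y 1 ^ α, x 1 ^ β * y 0 ^ β, x 1 ^ γ * y 1 ^ γ]
    let d1 : (Fin 4 → S) →ₗ[S] S :=
      (LinearMap.proj 0).comp (Matrix.of fun (_ : Fin 1) i => g i).mulVecLin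
    let M2 : Matrix (Fin 4) (Fin 4) S :=
      !![y 1 ^ α, 0, -(x 1 ^ β * y 0 ^ (β - α)), 0;
         -(y 0 ^ α), 0, 0, -(x 1 ^ γ * y 1 ^ (γ - α));
         0, x 1 ^ (γ - β) * y 1 ^ γ, x 0 ^ α, 0;
         0, -(y 0 ^ β), 0, x 0 ^ α]
    let d2 : (Fin 4 → S) →ₗ[S] (Fin 4 → S) := M2.mulVecLin
    let M3 : Matrix (Fin 4) (Fin 1) S :=
      Matrix.of fun i _ =>
        ![-(x 1 ^ γ * y 0 ^ (β - α) * y 1 ^ (γ - α)), x 0 ^ α,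
          -(x 1 ^ (γ - β) * y 1 ^ γ), y 0 ^ β] i
    let d3 : (Fin 1 → S) →ₗ[S] (Fin 4 → S) := M3.mulVecLin
    Function.Injective d3 ∧ Function.Exact d3 d2 ∧ Function.Exact d2 d1 ∧
      LinearMap.range d1 = Ideal.span {g 0, g 1, g 2, g 3} := by
  intro S x y g d1 M2 d2 M3 d3
  obtain ⟨a, rfl⟩ : ∃ a, β = α + a := ⟨β - α, by omega⟩
  obtain ⟨c, rfl⟩ : ∃ c, γ = α + a + c := ⟨γ - (α + a), by omega⟩
  have e1 : α + a - α = a := by omega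
  have e2 : α + a + c - α = a + c := by omega
  have e3 : α + a + c - (α + a) = c := by omega
  have hg : g = ![X (Sum.inl 0) ^ α * X (Sum.inr 0) ^ α, X (Sum.inl 0) ^ α * X (Sum.inr 1) ^ α,
      X (Sum.inl 1) ^ (α + a) * X (Sum.inr 0) ^ (α + a),
      X (Sum.inl 1) ^ (α + a + c) * X (Sum.inr 1) ^ (α + a + c)] := by
    funext i; fin_cases i <;> simp [g, x, y]
  have hd1 : ∀ v : Fin 4 → S,
      d1 v = g 0 * v 0 + g 1 * v 1 + g 2 * v 2 + g 3 * v 3 := by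
    intro v
    simp [d1, Matrix.mulVecLin_apply, Matrix.mulVec, dotProduct, Fin.sum_univ_four]
  have hd3 : ∀ (u : Fin 1 → S) (i : Fin 4),
      d3 u i = ![-(X (Sum.inl 1) ^ (α + a + c) * X (Sum.inr 0) ^ a * X (Sum.inr 1) ^ (a + c)),
          X (Sum.inl 0) ^ α,
          -(X (Sum.inl 1) ^ c * X (Sum.inr 1) ^ (α + a + c)), X (Sum.inr 0) ^ (α + a)] i * u 0 := by
    intro u i
    fin_cases i <;>
      simp [d3, M3, x, y, e1, e2, e3, Matrix.mulVecLin_apply, Matrix.mulVec, dotProduct] <;> ring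
  have hd2 : ∀ (v : Fin 4 → S),
      d2 v = ![X (Sum.inr 1) ^ α * v 0 - X (Sum.inl 1) ^ (α + a) * X (Sum.inr 0) ^ a * v 2,
               -(X (Sum.inr 0) ^ α) * v 0 - X (Sum.inl 1) ^ (α + a + c) * X (Sum.inr 1) ^ (a + c) * v 3,
               X (Sum.inl 1) ^ c * X (Sum.inr 1) ^ (α + a + c) * v 1 + X (Sum.inl 0) ^ α * v 2,
               -(X (Sum.inr 0) ^ (α + a)) * v 1 + X (Sum.inl 0) ^ α * v 3] := by
    intro v
    funext i
    fin_cases i <;>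
      simp [d2, M2, x, y, e1, e2, e3, Matrix.mulVecLin_apply, Matrix.mulVec, dotProduct,
        Fin.sum_univ_four] <;> ring
  have hXl0ne : (X (Sum.inl 0) : S) ^ α ≠ 0 := pow_ne_zero _ (X_ne_zero _)
  have hXr1ne : (X (Sum.inr 1) : S) ^ α ≠ 0 := pow_ne_zero _ (X_ne_zero _)
  have hnd1 : ¬ (X (Sum.inl 0) : S) ∣ (X (Sum.inl 1) ^ c * X (Sum.inr 1) ^ (α + a + c)) :=
    not_X_dvd_aux _ (by simp)
  have hndx1 : ¬ (X (Sum.inl 0) : S) ∣ (X (Sum.inl 1) ^ (α + a)) :=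
    not_X_dvd_aux _ (by simp)
  have hndB : ¬ (X (Sum.inr 0) : S) ∣ (X (Sum.inl 1) ^ c * X (Sum.inr 1) ^ (α + a + c)) :=
    not_X_dvd_aux _ (by simp)
  have hndy1 : ¬ (X (Sum.inr 0) : S) ∣ ((X (Sum.inr 1) : S) ^ α) :=
    not_X_dvd_aux _ (by simp)
  refine ⟨?_, ?_, ?_, ?_⟩
  · -- injectivity of d3
    intro u1 u2 h
    have h1 := congrFun h 1
    rw [hd3, hd3] at h1
    simp only [Matrix.cons_val_one, Matrix.head_cons] at h1
    funext i
    fin_cases i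
    exact mul_left_cancel₀ hXl0ne h1
  · -- exactness at d3 → d2
    rw [LinearMap.exact_iff]
    apply le_antisymm
    · rintro v hv
      rw [LinearMap.mem_ker, hd2] at hv
      have h0 := congrFun hv 0
      have h2 := congrFun hv 2
      have h3 := congrFun hv 3
      simp only [Fin.zero_eta, Fin.mk_one, Fin.reduceFinMk, Matrix.cons_val_zero, Matrix.cons_val_one, Matrix.head_cons,
        Matrix.cons_val_two, Matrix.cons_val_three, Matrix.tail_cons, Pi.zero_apply] at h0 h2 h3
      have h2' : (X (Sum.inl 0) : S) ^ α * v 2 =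
          (X (Sum.inl 1) ^ c * X (Sum.inr 1) ^ (α + a + c)) * (-(v 1)) := by
        linear_combination h2
      obtain ⟨t, ht1, ht2⟩ := split_eq_aux (Sum.inl 0) α hnd1 h2'
      have hv1 : v 1 = X (Sum.inl 0) ^ α * (-t) := by linear_combination -ht1
      have h3' : (X (Sum.inl 0) : S) ^ α * v 3 =
          X (Sum.inl 0) ^ α * (X (Sum.inr 0) ^ (α + a) * (-t)) := by
        linear_combination h3 - X (Sum.inr 0) ^ (α + a) * ht1
      have hv3 : v 3 = X (Sum.inr 0) ^ (α + a) * (-t) := mul_left_cancel₀ hXl0ne h3'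
      have h0' : (X (Sum.inr 1) : S) ^ α * v 0 = X (Sum.inr 1) ^ α *
          (X (Sum.inl 1) ^ (α + a + c) * X (Sum.inr 0) ^ a * X (Sum.inr 1) ^ (a + c) * t) := by
        linear_combination h0 + X (Sum.inl 1) ^ (α + a) * X (Sum.inr 0) ^ a * ht2
      have hv0 : v 0 = X (Sum.inl 1) ^ (α + a + c) * X (Sum.inr 0) ^ a * X (Sum.inr 1) ^ (a + c) * t :=
        mul_left_cancel₀ hXr1ne h0'
      refine LinearMap.mem_range.mpr ⟨fun _ => -t, ?_⟩
      funext i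
      rw [hd3]
      fin_cases i <;>
        simp only [Fin.zero_eta, Fin.mk_one, Fin.reduceFinMk, Matrix.cons_val_zero, Matrix.cons_val_one, Matrix.head_cons,
          Matrix.cons_val_two, Matrix.cons_val_three, Matrix.tail_cons]
      · linear_combination -hv0
      · linear_combination -hv1
      · linear_combination -ht2
      · linear_combination -hv3
    · rintro v hv
      obtain ⟨u, rfl⟩ := LinearMap.mem_range.mp hv
      rw [LinearMap.mem_ker, hd2]
      funext i
      fin_cases i <;>
        simp only [Fin.zero_eta, Fin.mk_one, Fin.reduceFinMk, Matrix.cons_val_zero, Matrix.cons_val_one, Matrix.head_cons,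
          Matrix.cons_val_two, Matrix.cons_val_three, Matrix.tail_cons, Pi.zero_apply, hd3] <;>
        ring
  · -- exactness at d2 → d1
    rw [LinearMap.exact_iff]
    apply le_antisymm
    · rintro v hv
      rw [LinearMap.mem_ker, hd1, hg] at hv
      simp only [Fin.zero_eta, Fin.mk_one, Fin.reduceFinMk, Matrix.cons_val_zero, Matrix.cons_val_one, Matrix.head_cons,
        Matrix.cons_val_two, Matrix.cons_val_three, Matrix.tail_cons] at hv
      have hsplit : (X (Sum.inl 0) : S) ^ α * (v 0 * X (Sum.inr 0) ^ α + v 1 * X (Sum.inr 1) ^ α) =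
          X (Sum.inl 1) ^ (α + a) * (-(v 2 * X (Sum.inr 0) ^ (α + a) +
            v 3 * (X (Sum.inl 1) ^ c * X (Sum.inr 1) ^ (α + a + c)))) := by
        linear_combination hv
      obtain ⟨t, ht1, ht2⟩ := split_eq_aux (Sum.inl 0) α hndx1 hsplit
      have hspan : (X (Sum.inl 0) : S) ^ α * t =
          (-(v 2)) * (X (Sum.inr 0) ^ (α + a)) +
          (-(v 3)) * (X (Sum.inl 1) ^ c * X (Sum.inr 1) ^ (α + a + c)) := by
        linear_combination -ht1
      have hA : phiAux (k := k) (Sum.inl 0) ((X (Sum.inr 0) : S) ^ (α + a)) =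
          Polynomial.C ((X ⟨Sum.inr 0, by decide⟩ : MvPolynomial _ k) ^ (α + a)) := by
        rw [map_pow, phiAux_X_ne (by decide), ← Polynomial.C_pow]
      have hB : phiAux (k := k) (Sum.inl 0) ((X (Sum.inl 1) : S) ^ c * X (Sum.inr 1) ^ (α + a + c)) =
          Polynomial.C ((X ⟨Sum.inl 1, by decide⟩ : MvPolynomial _ k) ^ c *
            (X ⟨Sum.inr 1, by decide⟩) ^ (α + a + c)) := by
        rw [map_mul, map_pow, map_pow, phiAux_X_ne (by decide),
          phiAux_X_ne (by decide), ← Polynomial.C_pow, ← Polynomial.C_pow, ← Polynomial.C_mul]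
      obtain ⟨q', r', hqr⟩ := span_step_aux (Sum.inl 0) α hA hB hspan
      have h5 : (X (Sum.inr 0) : S) ^ (α + a) * (v 2 + X (Sum.inl 0) ^ α * q') =
          (X (Sum.inl 1) ^ c * X (Sum.inr 1) ^ (α + a + c)) *
            (-(v 3 + X (Sum.inl 0) ^ α * r')) := by
        linear_combination -ht1 - X (Sum.inl 0) ^ α * hqr
      obtain ⟨p, hp1, hp2⟩ := split_eq_aux (Sum.inr 0) (α + a) hndB h5
      have h6 : (X (Sum.inr 0) : S) ^ α *
          (v 0 - q' * (X (Sum.inl 1) ^ (α + a) * X (Sum.inr 0) ^ a)) =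
          X (Sum.inr 1) ^ α *
          (-(v 1 - r' * (X (Sum.inl 1) ^ (α + a + c) * X (Sum.inr 1) ^ (a + c)))) := by
        linear_combination ht2 + X (Sum.inl 1) ^ (α + a) * hqr
      obtain ⟨t1, hq1, hq2⟩ := split_eq_aux (Sum.inr 0) α hndy1 h6
      refine LinearMap.mem_range.mpr ⟨![t1, p, -q', -r'], ?_⟩
      rw [hd2]
      funext i
      fin_cases i <;>
        simp only [Fin.zero_eta, Fin.mk_one, Fin.reduceFinMk, Matrix.cons_val_zero, Matrix.cons_val_one, Matrix.head_cons,
          Matrix.cons_val_two, Matrix.cons_val_three, Matrix.tail_cons]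
      · linear_combination -hq2
      · linear_combination hq1
      · linear_combination -hp2
      · linear_combination hp1
    · rintro v hv
      obtain ⟨u, rfl⟩ := LinearMap.mem_range.mp hv
      rw [LinearMap.mem_ker, hd1, hd2, hg]
      simp only [Fin.zero_eta, Fin.mk_one, Fin.reduceFinMk, Matrix.cons_val_zero, Matrix.cons_val_one, Matrix.head_cons,
        Matrix.cons_val_two, Matrix.cons_val_three, Matrix.tail_cons]
      ring
  · -- the image of d1 is the ideal
    apply le_antisymm
    · rintro z hz
      obtain ⟨v, rfl⟩ := LinearMap.mem_range.mp hz
      rw [hd1]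
      refine Ideal.add_mem _ (Ideal.add_mem _ (Ideal.add_mem _ ?_ ?_) ?_) ?_ <;>
        exact Ideal.mul_mem_right _ _ (Ideal.subset_span (by simp))
    · rw [Ideal.span_le]
      rintro z hz
      simp only [Set.mem_insert_iff, Set.mem_singleton_iff] at hz
      have mem : ∀ i : Fin 4, g i ∈ LinearMap.range d1 := by
        intro i
        fin_cases i
        · exact LinearMap.mem_range.mpr ⟨![1, 0, 0, 0], by rw [hd1]; simp⟩
        · exact LinearMap.mem_range.mpr ⟨![0, 1, 0, 0], by rw [hd1]; simp⟩
        · exact LinearMap.mem_range.mpr ⟨![0, 0, 1, 0], by rw [hd1]; simp⟩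
        · exact LinearMap.mem_range.mpr ⟨![0, 0, 0, 1], by rw [hd1]; simp⟩
      rcases hz with rfl | rfl | rfl | rfl
      · exact mem 0
      · exact mem 1
      · exact mem 2
      · exact mem 3
end

section
/- Let S = k[X_1,X_2,Y_1,Y_2] and let a < b and a < c be positive integers with a ≤ d. Then the ideal quotient/syzygy structure obstructs any length-3 free resolution supported on the labeled square: concretely, the Koszul-type relation module of J = (X_1^aY_1^a, X_1^bY_2^b, X_2^cY_1^c, X_2^dY_2^d) requires a first syzygy between X_1^aY_1^a and X_2^dY_2^d that is not in the submodule generated by the four 'edge' syzygies between cyclically adjacent generators. Equivalently, the cellular complex on the square with these vertex labels is not exact at homological degree 1. -/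
open MvPolynomial

/-- When `a < b` and `a < c` (no vertex of `K_{2,2}^ω` has all incident weights minimal), the
cellular complex on the labeled square is not exact at homological degree 1: the four edge
syzygies between cyclically adjacent generators of
`J = (X₁^aY₁^a, X₁^bY₂^b, X₂^cY₁^c, X₂^dY₂^d)` do not generate the whole syzygy module. -/
theorem square_not_exact (k : Type) [Field k] (a b c d : ℕ)
    (ha : 0 < a) (hd : 0 < d) (hab : a < b) (hac : a < c) (had : a ≤ d) :
    let S := MvPolynomial (Fin 2 ⊕ Fin 2) k
    let x : Fin 2 → S := fun i => X (Sum.inl i)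
    let y : Fin 2 → S := fun j => X (Sum.inr j)
    -- generators, in cyclic order (1,1), (1,2), (2,1), (2,2) as rows
    let g : Fin 4 → S :=
      ![x 0 ^ a * y 0 ^ a, x 0 ^ b * y 1 ^ b, x 1 ^ c * y 0 ^ c, x 1 ^ d * y 1 ^ d]
    let d1 : (Fin 4 → S) →ₗ[S] S :=
      (LinearMap.proj 0).comp (Matrix.of fun (_ : Fin 1) i => g i).mulVecLin
    -- columns: the four edge syzygies (lcm of endpoints divided by each endpoint)
    let M2 : Matrix (Fin 4) (Fin 4) S :=
      !![x 0 ^ (b - a) * y 1 ^ b, x 1 ^ c * y 0 ^ (c - a), 0, 0;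
         -(y 0 ^ a), 0, 0, x 1 ^ d * y 1 ^ (max b d - b);
         0, -(x 0 ^ a), x 1 ^ (max c d - c) * y 1 ^ d, 0;
         0, 0, -(x 1 ^ (max c d - d) * y 0 ^ c), -(x 0 ^ b * y 1 ^ (max b d - d))]
    let d2 : (Fin 4 → S) →ₗ[S] (Fin 4 → S) := M2.mulVecLin
    ¬ Function.Exact d2 d1 := by
  intro S x y g d1 M2 d2 hex
  set v : Fin 4 → S := ![x 1 ^ d * y 1 ^ d, 0, 0, -(x 0 ^ a * y 0 ^ a)] with hv
  have hd1v : d1 v = 0 := by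
    show (Matrix.of fun (_ : Fin 1) i => g i).mulVec v 0 = 0
    simp [Matrix.mulVec, dotProduct, Fin.sum_univ_four, v, g]
    ring
  obtain ⟨w, hw⟩ := (hex v).mp hd1v
  have h0 : x 0 ^ (b - a) * y 1 ^ b * w 0 + x 1 ^ c * y 0 ^ (c - a) * w 1
      = x 1 ^ d * y 1 ^ d := by
    have h := congrFun hw 0
    show _ = v 0
    rw [← h]
    show _ = M2.mulVec w 0
    simp [M2, Matrix.mulVec, dotProduct, Fin.sum_univ_four]
  -- evaluate at x0=0, y0=0, x1=1, y1=1
  set p : Fin 2 ⊕ Fin 2 → k := Sum.elim ![0, 1] ![0, 1] with hp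
  have := congrArg (eval p) h0
  simp only [map_add, map_mul, map_pow, x, y, eval_X] at this
  have hpinl0 : p (Sum.inl 0) = 0 := rfl
  have hpinr0 : p (Sum.inr 0) = 0 := rfl
  have hpinl1 : p (Sum.inl 1) = 1 := rfl
  have hpinr1 : p (Sum.inr 1) = 1 := rfl
  rw [hpinl0, hpinr0, hpinl1, hpinr1, zero_pow (Nat.sub_ne_zero_of_lt hab),
    zero_pow (Nat.sub_ne_zero_of_lt hac)] at this
  simp at this
end

section
/- Let S = k[X,Y_1,…,Y_n] and α a positive integer. The ideal (X^αY_1^α,…,X^αY_n^α) equals X^α · (Y_1^α,…,Y_n^α), and S/(X^αY_1^α,…,X^αY_n^α) has projective dimension n over S. -/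
open MvPolynomial

/-- `b` is the sequence of Betti numbers of `S/I`: `S/I` admits a free resolution by modules of
ranks `b 0 = 1, b 1, b 2, …` which is minimal, i.e. all entries of the differentials lie in the
maximal ideal generated by the variables. -/
def MinimalFreeRes {k : Type} [Field k] {σ : Type} (I : Ideal (MvPolynomial σ k))
    (b : ℕ → ℕ) : Prop :=
  b 0 = 1 ∧
  ∃ (ε : (Fin (b 1) → MvPolynomial σ k) →ₗ[MvPolynomial σ k] MvPolynomial σ k)
    (d : (i : ℕ) → ((Fin (b (i + 2)) → MvPolynomial σ k) →ₗ[MvPolynomial σ k]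
      (Fin (b (i + 1)) → MvPolynomial σ k))),
    LinearMap.range ε = I ∧
    Function.Exact (d 0) ε ∧
    (∀ i, Function.Exact (d (i + 1)) (d i)) ∧
    (∀ v, ε v ∈ Ideal.span (Set.range (X : σ → MvPolynomial σ k))) ∧
    (∀ i v j, d i v j ∈ Ideal.span (Set.range (X : σ → MvPolynomial σ k)))

noncomputable section StarPDAux

namespace StarPD

variable {k : Type} [Field k] {n : ℕ}

/-- the polynomial ring -/
abbrev RR (k : Type) [Field k] (n : ℕ) := MvPolynomial (Option (Fin n)) k
/-- big ambient free module indexed by all subsets -/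
abbrev WW (k : Type) [Field k] (n : ℕ) := Finset (Fin n) → RR k n
/-- free module indexed by subsets of size m -/
abbrev TT (k : Type) [Field k] (n : ℕ) (m : ℕ) := {s : Finset (Fin n) // s.card = m} → RR k n

/-- Koszul sign -/
def sgn (j : Fin n) (t : Finset (Fin n)) : ℤ := (-1) ^ (t.filter (fun i => i < j)).card

/-- the condition for the contracting homotopy to act on a monomial -/
def pred (α : ℕ) (a : Option (Fin n) →₀ ℕ) (t : Finset (Fin n)) (j : Fin n) : Prop :=
  α ≤ a (some j) ∧ ∀ i, i < j → i ∉ t ∧ a (some i) < α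

instance (α : ℕ) (a : Option (Fin n) →₀ ℕ) (t : Finset (Fin n)) (j : Fin n) :
    Decidable (pred α a t j) := by unfold pred; infer_instance

variable (k n) in
/-- monomial-extraction map used in the homotopy -/
def Phi (α : ℕ) (j : Fin n) (t : Finset (Fin n)) : RR k n →ₗ[k] RR k n :=
  (basisMonomials (Option (Fin n)) k).constr k fun a =>
    if pred α a t j then monomial (a - Finsupp.single (some j) α) (1 : k) else 0

variable (k n) in
/-- Koszul differential on the big module -/
def Dg (α : ℕ) : WW k n →ₗ[RR k n] WW k n where
  toFun w t := ∑ j ∈ tᶜ, sgn j t • (X (some j) ^ α * w (insert j t))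
  map_add' v w := by
    funext t
    simp [mul_add, smul_add, Finset.sum_add_distrib]
  map_smul' r w := by
    funext t
    simp only [Pi.smul_apply, smul_eq_mul, RingHom.id_apply, Finset.mul_sum]
    refine Finset.sum_congr rfl fun j _ => ?_
    rw [mul_smul_comm, mul_left_comm]

variable (k n) in
/-- contracting homotopy on the big module -/
def Hg (α : ℕ) : WW k n →+ WW k n :=
  AddMonoidHom.mk' (fun w s => ∑ j ∈ s, sgn j (s.erase j) • Phi k n α j (s.erase j) (w (s.erase j)))
    (by
      intro v w
      funext s
      simp [Finset.sum_add_distrib])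

lemma Phi_monomial (α : ℕ) (j : Fin n) (t : Finset (Fin n)) (a : Option (Fin n) →₀ ℕ) (c : k) :
    Phi k n α j t (monomial a c)
      = if pred α a t j then monomial (a - Finsupp.single (some j) α) c else 0 := by
  have hb : (basisMonomials (Option (Fin n)) k) a = monomial a (1 : k) :=
    congrFun (coe_basisMonomials _ _) a
  have hm : (monomial a c : RR k n) = c • (basisMonomials (Option (Fin n)) k) a := by
    rw [hb, smul_monomial, smul_eq_mul, mul_one]
  rw [hm, map_smul, Phi, Module.Basis.constr_basis]
  split_ifs with h
  · rw [smul_monomial, smul_eq_mul, mul_one]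
  · rw [smul_zero]

lemma sgn_insert (j j' : Fin n) (s : Finset (Fin n)) (h : j' ∉ s) (hne : j ≠ j') :
    sgn j (insert j' s) = (if j' < j then -1 else 1) * sgn j s := by
  unfold sgn
  rw [Finset.filter_insert]
  split_ifs with h1
  · rw [Finset.card_insert_of_notMem (fun hc => h (Finset.mem_of_mem_filter _ hc)),
      pow_succ, mul_comm]
  · rw [one_mul]

lemma sgn_erase (j0 j : Fin n) (t : Finset (Fin n)) (h : ¬ j < j0) :
    sgn j0 (t.erase j) = sgn j0 t := by
  unfold sgn
  rw [Finset.filter_erase, Finset.erase_eq_of_notMem]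
  intro hc
  exact h (Finset.mem_filter.mp hc).2

lemma sgn_mul_self (j : Fin n) (t : Finset (Fin n)) : sgn j t * sgn j t = 1 := by
  unfold sgn
  rw [← pow_add]
  exact Even.neg_one_pow ⟨_, rfl⟩

lemma pred_unique {α : ℕ} {a : Option (Fin n) →₀ ℕ} {t : Finset (Fin n)} {j j' : Fin n}
    (h : pred α a t j) (h' : pred α a t j') : j = j' := by
  rcases lt_trichotomy j j' with h1 | h1 | h1
  · exact absurd h.1 (Nat.not_le.mpr ((h'.2 j h1).2))
  · exact h1
  · exact absurd h'.1 (Nat.not_le.mpr ((h.2 j' h1).2))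


lemma sum_ite_univ (M : Type*) [AddCommMonoid M] (f : Fin n → M) (s : Finset (Fin n)) :
    ∑ j ∈ s, f j = ∑ j : Fin n, if j ∈ s then f j else 0 := by
  rw [Finset.sum_ite_mem, Finset.univ_inter]

lemma Dg_apply (α : ℕ) (w : WW k n) (t : Finset (Fin n)) :
    Dg k n α w t = ∑ j ∈ tᶜ, sgn j t • (X (some j) ^ α * w (insert j t)) := rfl

lemma Hg_apply (α : ℕ) (w : WW k n) (s : Finset (Fin n)) :
    Hg k n α w s = ∑ j ∈ s, sgn j (s.erase j) • Phi k n α j (s.erase j) (w (s.erase j)) := rfl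

lemma Dg_single (α : ℕ) (t : Finset (Fin n)) (p : RR k n) :
    Dg k n α (Pi.single t p)
      = ∑ j ∈ t, Pi.single (t.erase j) (sgn j (t.erase j) • (X (some j) ^ α * p)) := by
  funext u
  rw [Dg_apply, Finset.sum_apply]
  simp only [Pi.single_apply]
  rw [sum_ite_univ _ _ uᶜ, sum_ite_univ _ _ t]
  refine Finset.sum_congr rfl fun j _ => ?_
  by_cases hju : j ∈ u
  · rw [if_neg (by simp [hju])]
    symm
    split_ifs with h1 h2
    · exact absurd (h2 ▸ hju) (Finset.notMem_erase j t)
    · rfl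
    · rfl
  · rw [if_pos (Finset.mem_compl.mpr hju)]
    by_cases h2 : insert j u = t
    · have hjt : j ∈ t := h2 ▸ Finset.mem_insert_self j u
      have hu : u = t.erase j := by rw [← h2, Finset.erase_insert hju]
      rw [if_pos h2, if_pos hjt, if_pos hu, hu]
    · rw [if_neg h2, mul_zero, smul_zero]
      symm
      split_ifs with h3 h4
      · exact absurd (by rw [h4]; exact Finset.insert_erase h3) h2
      · rfl
      · rfl

lemma Hg_single (α : ℕ) (t : Finset (Fin n)) (p : RR k n) :
    Hg k n α (Pi.single t p) = ∑ j ∈ tᶜ, Pi.single (insert j t) (sgn j t • Phi k n α j t p) := by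
  funext s
  rw [Hg_apply, Finset.sum_apply]
  simp only [Pi.single_apply]
  rw [sum_ite_univ _ _ s, sum_ite_univ _ _ tᶜ]
  refine Finset.sum_congr rfl fun j _ => ?_
  by_cases hjs : j ∈ s
  · by_cases h2 : s.erase j = t
    · have hjt : j ∉ t := h2 ▸ Finset.notMem_erase j s
      have hs : s = insert j t := by rw [← h2, Finset.insert_erase hjs]
      rw [if_pos hjs, if_pos h2, if_pos (Finset.mem_compl.mpr hjt), if_pos hs, h2]
    · rw [if_pos hjs, if_neg h2, map_zero, smul_zero]
      symm
      split_ifs with h3 h4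
      · exact absurd (by rw [h4]; exact Finset.erase_insert (Finset.mem_compl.mp h3)) h2
      · rfl
      · rfl
  · rw [if_neg hjs]
    symm
    split_ifs with h3 h4
    · exact absurd (h4 ▸ Finset.mem_insert_self j t) hjs
    · rfl
    · rfl


lemma pair_antisym (α : ℕ) (t : Finset (Fin n)) (p : RR k n) {j j' : Fin n}
    (hj : j ∈ t) (hj' : j' ∈ t) (hne : j' ≠ j) :
    (Pi.single ((t.erase j).erase j')
        (sgn j' ((t.erase j).erase j') •
          (X (some j') ^ α * (sgn j (t.erase j) • (X (some j) ^ α * p)))) : WW k n)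
      + (Pi.single ((t.erase j').erase j)
        (sgn j ((t.erase j').erase j) •
          (X (some j) ^ α * (sgn j' (t.erase j') • (X (some j') ^ α * p)))) : WW k n) = 0 := by
  have hcomm : (t.erase j').erase j = (t.erase j).erase j' := Finset.erase_right_comm
  obtain ⟨u, hu⟩ : ∃ u, (t.erase j).erase j' = u := ⟨_, rfl⟩
  have hj'u : j' ∉ u := hu ▸ Finset.notMem_erase _ _
  have hju : j ∉ u := by rw [← hu, ← hcomm]; exact Finset.notMem_erase _ _
  have h1 : t.erase j = insert j' u := by
    rw [← hu]
    exact (Finset.insert_erase (Finset.mem_erase.mpr ⟨hne, hj'⟩)).symm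
  have h2 : t.erase j' = insert j u := by
    rw [← hu, ← hcomm]
    exact (Finset.insert_erase (Finset.mem_erase.mpr ⟨fun h => hne h.symm, hj⟩)).symm
  rw [hcomm, hu, ← Pi.single_add, h1, h2,
    sgn_insert j j' _ hj'u (fun h => hne h.symm), sgn_insert j' j _ hju hne,
    mul_smul_comm, mul_smul_comm, smul_smul, smul_smul]
  have hmul : (X (some j') : RR k n) ^ α * (X (some j) ^ α * p)
      = X (some j) ^ α * (X (some j') ^ α * p) := by ring
  rw [hmul, ← add_smul]
  have hs : sgn j' u * ((if j' < j then -1 else 1) * sgn j u)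
      + sgn j u * ((if j < j' then -1 else 1) * sgn j' u) = 0 := by
    rcases lt_or_gt_of_ne hne with h | h
    · rw [if_pos h, if_neg (not_lt_of_gt h)]; ring
    · rw [if_neg (not_lt_of_gt h), if_pos h]; ring
  rw [hs, zero_smul, Pi.single_zero]

lemma Dg_Dg_single (α : ℕ) (t : Finset (Fin n)) (p : RR k n) :
    Dg k n α (Dg k n α (Pi.single t p)) = 0 := by
  rw [Dg_single, map_sum]
  have h : ∀ j ∈ t, Dg k n α (Pi.single (t.erase j) (sgn j (t.erase j) • (X (some j) ^ α * p)))
      = ∑ j' ∈ t, if j' ≠ j then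
          (Pi.single ((t.erase j).erase j')
            (sgn j' ((t.erase j).erase j') •
              (X (some j') ^ α * (sgn j (t.erase j) • (X (some j) ^ α * p)))) : WW k n) else 0 := by
    intro j hj
    rw [Dg_single, ← Finset.filter_ne' t j, Finset.sum_filter]
  rw [Finset.sum_congr rfl h, ← Finset.sum_product']
  refine Finset.sum_involution (fun x _ => Prod.swap x) ?_ ?_ ?_ ?_
  · rintro ⟨j, j'⟩ hm
    rw [Finset.mem_product] at hm
    dsimp only [Prod.swap_prod_mk]
    by_cases hne : j' ≠ j
    · rw [if_pos hne, if_pos (fun h => hne h.symm)]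
      exact pair_antisym α t p hm.1 hm.2 hne
    · rw [if_neg hne, if_neg (fun h => hne (fun he => h he.symm)), add_zero]
  · rintro ⟨j, j'⟩ hm hf
    dsimp only [Prod.swap_prod_mk]
    intro hsw
    have hjj : j' = j := (Prod.mk.injEq _ _ _ _).mp hsw |>.1
    apply hf
    rw [if_neg (by simp [hjj])]
  · rintro ⟨j, j'⟩ hm
    rw [Finset.mem_product] at hm
    dsimp only [Prod.swap_prod_mk]
    exact Finset.mem_product.mpr ⟨hm.2, hm.1⟩
  · rintro ⟨j, j'⟩ _
    rfl


lemma addsingle_apply_ne (α : ℕ) (a : Option (Fin n) →₀ ℕ) {j i : Fin n} (h : i ≠ j) :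
    (Finsupp.single (some j) α + a) (some i) = a (some i) := by
  rw [Finsupp.add_apply, Finsupp.single_apply, if_neg (by simpa using Ne.symm h), zero_add]

lemma addsingle_apply_self (α : ℕ) (a : Option (Fin n) →₀ ℕ) (j : Fin n) :
    (Finsupp.single (some j) α + a) (some j) = α + a (some j) := by
  rw [Finsupp.add_apply, Finsupp.single_apply, if_pos rfl]

lemma pred_shift_lt {α : ℕ} {a : Option (Fin n) →₀ ℕ} {t : Finset (Fin n)} {j j' : Fin n}
    (hlt : j' < j) :
    pred α (Finsupp.single (some j) α + a) (t.erase j) j' ↔ pred α a t j' := by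
  unfold pred
  have hne : ∀ i : Fin n, i < j' → i ≠ j := fun i hi => ne_of_lt (hi.trans hlt)
  constructor
  · rintro ⟨h1, h2⟩
    refine ⟨by rwa [addsingle_apply_ne α a (ne_of_lt hlt)] at h1, fun i hi => ?_⟩
    obtain ⟨hm, hv⟩ := h2 i hi
    rw [addsingle_apply_ne α a (hne i hi)] at hv
    refine ⟨fun hc => hm (Finset.mem_erase.mpr ⟨hne i hi, hc⟩), hv⟩
  · rintro ⟨h1, h2⟩
    refine ⟨by rwa [addsingle_apply_ne α a (ne_of_lt hlt)], fun i hi => ?_⟩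
    obtain ⟨hm, hv⟩ := h2 i hi
    exact ⟨fun hc => hm (Finset.mem_of_mem_erase hc),
      by rwa [addsingle_apply_ne α a (hne i hi)]⟩

lemma pred_shift_self {α : ℕ} {a : Option (Fin n) →₀ ℕ} {t : Finset (Fin n)} {j : Fin n} :
    pred α (Finsupp.single (some j) α + a) (t.erase j) j
      ↔ ∀ i, i < j → i ∉ t ∧ a (some i) < α := by
  unfold pred
  constructor
  · rintro ⟨h1, h2⟩ i hi
    obtain ⟨hm, hv⟩ := h2 i hi
    rw [addsingle_apply_ne α a (ne_of_lt hi)] at hv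
    exact ⟨fun hc => hm (Finset.mem_erase.mpr ⟨ne_of_lt hi, hc⟩), hv⟩
  · intro h
    refine ⟨by rw [addsingle_apply_self]; exact Nat.le_add_right α _, fun i hi => ?_⟩
    obtain ⟨hm, hv⟩ := h i hi
    exact ⟨fun hc => hm (Finset.mem_of_mem_erase hc),
      by rwa [addsingle_apply_ne α a (ne_of_lt hi)]⟩

lemma pred_shift_gt {α : ℕ} {a : Option (Fin n) →₀ ℕ} {t : Finset (Fin n)} {j j' : Fin n}
    (hlt : j < j') :
    ¬ pred α (Finsupp.single (some j) α + a) (t.erase j) j' := by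
  rintro ⟨h1, h2⟩
  have := (h2 j hlt).2
  rw [addsingle_apply_self] at this
  omega


lemma Hg_Dg_single (α : ℕ) (t : Finset (Fin n)) (a : Option (Fin n) →₀ ℕ) (c : k) :
    Hg k n α (Dg k n α (Pi.single t (monomial a c)))
      = ∑ j ∈ t, ∑ j' ∈ (t.erase j)ᶜ,
          Pi.single (insert j' (t.erase j))
            ((sgn j (t.erase j) * sgn j' (t.erase j)) •
              (if pred α (Finsupp.single (some j) α + a) (t.erase j) j'
               then monomial ((Finsupp.single (some j) α + a) - Finsupp.single (some j') α) c
               else 0)) := by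
  rw [Dg_single, map_sum]
  refine Finset.sum_congr rfl fun j hj => ?_
  rw [← monomial_single_add, Pi.single_smul, map_zsmul, Hg_single, Finset.smul_sum]
  refine Finset.sum_congr rfl fun j' hj' => ?_
  rw [← Pi.single_smul, smul_smul, Phi_monomial]

lemma Hg_single_eq_zero (α : ℕ) (t : Finset (Fin n)) (a : Option (Fin n) →₀ ℕ) (c : k)
    (hP : ¬ ∃ j, j ∉ t ∧ pred α a t j) :
    Hg k n α (Pi.single t (monomial a c)) = 0 := by
  rw [Hg_single]
  refine Finset.sum_eq_zero fun j hj => ?_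
  rw [Phi_monomial, if_neg (fun hp => hP ⟨j, Finset.mem_compl.mp hj, hp⟩), smul_zero,
    Pi.single_zero]

lemma key_single_nopred (α : ℕ) (t : Finset (Fin n)) (htne : t.Nonempty)
    (a : Option (Fin n) →₀ ℕ) (c : k) (hP : ¬ ∃ j, j ∉ t ∧ pred α a t j) :
    Hg k n α (Dg k n α (Pi.single t (monomial a c))) = Pi.single t (monomial a c) := by
  rw [Hg_Dg_single]
  have hstep : ∀ j ∈ t, (∑ j' ∈ (t.erase j)ᶜ,
          Pi.single (insert j' (t.erase j))
            ((sgn j (t.erase j) * sgn j' (t.erase j)) •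
              (if pred α (Finsupp.single (some j) α + a) (t.erase j) j'
               then monomial ((Finsupp.single (some j) α + a) - Finsupp.single (some j') α) c
               else 0)) : WW k n)
      = Pi.single t (if (∀ i, i < j → i ∉ t ∧ a (some i) < α) then monomial a c else 0) := by
    intro j hj
    rw [Finset.sum_eq_single_of_mem j (Finset.mem_compl.mpr (Finset.notMem_erase j t))]
    · rw [Finset.insert_erase hj, sgn_mul_self, one_smul, add_tsub_cancel_left]
      by_cases hC : ∀ i, i < j → i ∉ t ∧ a (some i) < α
      · rw [if_pos (pred_shift_self.mpr hC), if_pos hC]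
      · rw [if_neg (fun hp => hC (pred_shift_self.mp hp)), if_neg hC]
    · intro j' hj'mem hne
      have hj't : j' ∉ t := fun hc =>
        (Finset.mem_compl.mp hj'mem) (Finset.mem_erase.mpr ⟨hne, hc⟩)
      rcases lt_trichotomy j j' with h | h | h
      · rw [if_neg (pred_shift_gt h), smul_zero, Pi.single_zero]
      · exact absurd h.symm hne
      · rw [if_neg (fun hp => hP ⟨j', hj't, (pred_shift_lt h).mp hp⟩), smul_zero, Pi.single_zero]
  rw [Finset.sum_congr rfl hstep]
  have hBne : (Finset.univ.filter fun j : Fin n => j ∈ t ∨ α ≤ a (some j)).Nonempty :=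
    ⟨htne.choose, Finset.mem_filter.mpr ⟨Finset.mem_univ _, Or.inl htne.choose_spec⟩⟩
  set B := Finset.univ.filter fun j : Fin n => j ∈ t ∨ α ≤ a (some j) with hB
  set j1 := B.min' hBne with hj1
  have hmin : ∀ i, i < j1 → i ∉ t ∧ a (some i) < α := by
    intro i hi
    have hiB : i ∉ B := fun hc => absurd (Finset.min'_le B i hc) (not_le.mpr hi)
    rw [hB, Finset.mem_filter] at hiB
    push_neg at hiB
    exact ⟨(hiB (Finset.mem_univ i)).1, (hiB (Finset.mem_univ i)).2⟩
  have hj1B : j1 ∈ B := Finset.min'_mem B hBne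
  rw [hB, Finset.mem_filter] at hj1B
  have hj1t : j1 ∈ t := by
    rcases hj1B.2 with h | h
    · exact h
    · by_cases hc : j1 ∈ t
      · exact hc
      · exact absurd ⟨j1, hc, h, hmin⟩ hP
  rw [Finset.sum_eq_single_of_mem j1 hj1t, if_pos hmin]
  intro j hj hne
  have hnC : ¬ ∀ i, i < j → i ∉ t ∧ a (some i) < α := by
    intro hC
    rcases lt_trichotomy j j1 with h | h | h
    · exact absurd (Finset.min'_le B j (Finset.mem_filter.mpr ⟨Finset.mem_univ _, Or.inl hj⟩))
        (not_le.mpr h)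
    · exact hne h
    · exact (hC j1 h).1 hj1t
  rw [if_neg hnC, Pi.single_zero]


lemma key_single_pred (α : ℕ) (t : Finset (Fin n))
    (a : Option (Fin n) →₀ ℕ) (c : k) {j0 : Fin n} (hj0t : j0 ∉ t) (hj0p : pred α a t j0) :
    Dg k n α (Hg k n α (Pi.single t (monomial a c)))
      + Hg k n α (Dg k n α (Pi.single t (monomial a c))) = Pi.single t (monomial a c) := by
  have htj : ∀ j ∈ t, j0 < j := by
    intro j hj
    rcases lt_trichotomy j0 j with h | h | h
    · exact h
    · exact absurd (h ▸ hj) hj0t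
    · exact absurd hj (hj0p.2 j h).1
  have hle : Finsupp.single (some j0) α ≤ a := Finsupp.single_le_iff.mpr hj0p.1
  -- Hg x
  have hx : Hg k n α (Pi.single t (monomial a c))
      = Pi.single (insert j0 t)
          (sgn j0 t • Phi k n α j0 t (monomial a c)) := by
    rw [Hg_single]
    rw [Finset.sum_eq_single_of_mem j0 (Finset.mem_compl.mpr hj0t)]
    intro j hj hne
    rw [Phi_monomial, if_neg (fun hp => hne (pred_unique hp hj0p)), smul_zero, Pi.single_zero]
  rw [hx, Phi_monomial, if_pos hj0p, Dg_single, Finset.sum_insert hj0t, Hg_Dg_single]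
  -- the j0 term of Dg (Hg x) is x
  have hterm0 : (Pi.single ((insert j0 t).erase j0)
      (sgn j0 ((insert j0 t).erase j0) •
        (X (some j0) ^ α *
          (sgn j0 t • monomial (a - Finsupp.single (some j0) α) c))) : WW k n)
      = Pi.single t (monomial a c) := by
    rw [Finset.erase_insert hj0t]
    congr 1
    rw [mul_smul_comm, smul_smul, sgn_mul_self, one_smul, ← monomial_single_add,
      add_tsub_cancel_of_le hle]
  rw [hterm0]
  -- remaining terms of Dg (Hg x)
  have hrest : ∀ j ∈ t, (Pi.single ((insert j0 t).erase j)
      (sgn j ((insert j0 t).erase j) •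
        (X (some j) ^ α *
          (sgn j0 t • monomial (a - Finsupp.single (some j0) α) c))) : WW k n)
      = Pi.single (insert j0 (t.erase j))
          ((-(sgn j (t.erase j) * sgn j0 (t.erase j))) •
            monomial ((Finsupp.single (some j) α + a) - Finsupp.single (some j0) α) c) := by
    intro j hj
    have hj0j : j0 < j := htj j hj
    have hne : j0 ≠ j := ne_of_lt hj0j
    rw [Finset.erase_insert_of_ne hne]
    congr 1
    rw [sgn_insert j j0 (t.erase j) (fun hc => hj0t (Finset.mem_of_mem_erase hc)) hne.symm,
      if_pos hj0j, mul_smul_comm, smul_smul, ← monomial_single_add,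
      ← add_tsub_assoc_of_le hle, ← sgn_erase j0 j t hj0j.asymm]
    ring_nf
  rw [Finset.sum_congr rfl hrest]
  -- the inner sums of Hg (Dg x) collapse
  have hinner : ∀ j ∈ t, (∑ j' ∈ (t.erase j)ᶜ,
      Pi.single (insert j' (t.erase j))
        ((sgn j (t.erase j) * sgn j' (t.erase j)) •
          (if pred α (Finsupp.single (some j) α + a) (t.erase j) j'
           then monomial ((Finsupp.single (some j) α + a) - Finsupp.single (some j') α) c
           else 0)) : WW k n)
      = Pi.single (insert j0 (t.erase j))
          ((sgn j (t.erase j) * sgn j0 (t.erase j)) •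
            monomial ((Finsupp.single (some j) α + a) - Finsupp.single (some j0) α) c) := by
    intro j hj
    have hj0j : j0 < j := htj j hj
    rw [Finset.sum_eq_single_of_mem j0
        (Finset.mem_compl.mpr (fun hc => hj0t (Finset.mem_of_mem_erase hc)))]
    · rw [if_pos ((pred_shift_lt hj0j).mpr hj0p)]
    · intro j' hj'm hne
      by_cases hjj' : j' = j
      · subst hjj'
        rw [if_neg (fun hp => absurd hj0p.1 (Nat.not_le.mpr ((pred_shift_self.mp hp) j0 hj0j).2)),
          smul_zero, Pi.single_zero]
      · have hj't : j' ∉ t := fun hc => (Finset.mem_compl.mp hj'm)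
          (Finset.mem_erase.mpr ⟨hjj', hc⟩)
        rcases lt_trichotomy j j' with h | h | h
        · rw [if_neg (pred_shift_gt h), smul_zero, Pi.single_zero]
        · exact absurd h.symm hjj'
        · rw [if_neg (fun hp => hne (pred_unique ((pred_shift_lt h).mp hp) hj0p)),
            smul_zero, Pi.single_zero]
  rw [Finset.sum_congr rfl hinner, add_assoc, ← Finset.sum_add_distrib]
  have hcancel : ∀ j ∈ t, (Pi.single (insert j0 (t.erase j))
          ((-(sgn j (t.erase j) * sgn j0 (t.erase j))) •
            monomial ((Finsupp.single (some j) α + a) - Finsupp.single (some j0) α) c) : WW k n)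
      + Pi.single (insert j0 (t.erase j))
          ((sgn j (t.erase j) * sgn j0 (t.erase j)) •
            monomial ((Finsupp.single (some j) α + a) - Finsupp.single (some j0) α) c) = 0 := by
    intro j hj
    rw [← Pi.single_add, ← add_smul, neg_add_cancel, zero_smul, Pi.single_zero]
  rw [Finset.sum_congr rfl hcancel, Finset.sum_const, smul_zero, add_zero]


lemma key_single (α : ℕ) (t : Finset (Fin n)) (htne : t.Nonempty)
    (a : Option (Fin n) →₀ ℕ) (c : k) :
    Dg k n α (Hg k n α (Pi.single t (monomial a c)))
      + Hg k n α (Dg k n α (Pi.single t (monomial a c))) = Pi.single t (monomial a c) := by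
  by_cases hP : ∃ j, j ∉ t ∧ pred α a t j
  · obtain ⟨j0, hj0t, hj0p⟩ := hP
    exact key_single_pred α t a c hj0t hj0p
  · rw [Hg_single_eq_zero α t a c hP, map_zero, zero_add]
    exact key_single_nopred α t htne a c hP

/-- the homotopy operator as an additive map -/
def FF (α : ℕ) : WW k n →+ WW k n :=
  ((Dg k n α).toAddMonoidHom.comp (Hg k n α)) + ((Hg k n α).comp (Dg k n α).toAddMonoidHom)

lemma FF_apply (α : ℕ) (w : WW k n) :
    FF α w = Dg k n α (Hg k n α w) + Hg k n α (Dg k n α w) := rfl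

lemma key_W (α m : ℕ) (w : WW k n) (hw : ∀ s : Finset (Fin n), s.card ≠ m + 1 → w s = 0) :
    Dg k n α (Hg k n α w) + Hg k n α (Dg k n α w) = w := by
  rw [← FF_apply]
  have hdec : w = ∑ s : Finset (Fin n), Pi.single s (w s) := (Finset.univ_sum_single w).symm
  rw [hdec, map_sum]
  refine Finset.sum_congr rfl fun s _ => ?_
  by_cases hs : s.card = m + 1
  · have hne : s.Nonempty := Finset.card_pos.mp (by omega)
    have hws : w s = ∑ a ∈ (w s).support, monomial a (coeff a (w s)) := (w s).as_sum
    have hsingle : (Pi.single s (∑ a ∈ (w s).support, monomial a (coeff a (w s))) : WW k n)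
        = ∑ a ∈ (w s).support, Pi.single s (monomial a (coeff a (w s))) := by
      induction (w s).support using Finset.induction_on with
      | empty => simp
      | insert x s' hx ih =>
        rw [Finset.sum_insert hx, Finset.sum_insert hx, ← ih, Pi.single_add]
    rw [hws, hsingle, map_sum]
    refine Finset.sum_congr rfl fun a _ => ?_
    exact key_single α s hne a _
  · rw [hw s hs, Pi.single_zero, map_zero]

lemma Dg_Dg (α : ℕ) (w : WW k n) : Dg k n α (Dg k n α w) = 0 := by
  have hdec : w = ∑ s : Finset (Fin n), Pi.single s (w s) := (Finset.univ_sum_single w).symm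
  rw [hdec, map_sum, map_sum]
  exact Finset.sum_eq_zero fun s _ => Dg_Dg_single α s (w s)

/-- extension of a card-homogeneous element to the big module -/
def extm (m : ℕ) : TT k n m →ₗ[RR k n] WW k n where
  toFun v s := if h : s.card = m then v ⟨s, h⟩ else 0
  map_add' v w := by funext s; by_cases h : s.card = m <;> simp [h]
  map_smul' r v := by funext s; by_cases h : s.card = m <;> simp [h]

/-- projection from the big module -/
def projm (m : ℕ) : WW k n →ₗ[RR k n] TT k n m where
  toFun w t := w t.1
  map_add' v w := rfl
  map_smul' r v := rfl

lemma proj_ext (m : ℕ) (v : TT k n m) : projm m (extm m v) = v := by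
  funext t
  show (if h : t.1.card = m then v ⟨t.1, h⟩ else 0) = v t
  rw [dif_pos t.2]

lemma ext_inj {m : ℕ} {v v' : TT k n m} (h : extm m v = extm m v') : v = v' := by
  rw [← proj_ext m v, ← proj_ext m v', h]

variable (k n) in
/-- the Koszul differential between card-homogeneous levels -/
def Dc (α m : ℕ) : TT k n (m + 1) →ₗ[RR k n] TT k n m :=
  projm m ∘ₗ Dg k n α ∘ₗ extm (m + 1)

lemma Dg_ext_card (α m : ℕ) (v : TT k n (m + 1)) (s : Finset (Fin n)) (h : s.card ≠ m) :
    Dg k n α (extm (m + 1) v) s = 0 := by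
  rw [Dg_apply]
  refine Finset.sum_eq_zero fun j hj => ?_
  have hc : (insert j s).card ≠ m + 1 := by
    rw [Finset.card_insert_of_notMem (Finset.mem_compl.mp hj)]
    omega
  show sgn j s • (X (some j) ^ α * (if h : (insert j s).card = m + 1 then _ else 0)) = 0
  rw [dif_neg hc, mul_zero, smul_zero]

lemma ext_Dc (α m : ℕ) (v : TT k n (m + 1)) :
    extm m (Dc k n α m v) = Dg k n α (extm (m + 1) v) := by
  funext s
  show (if h : s.card = m then Dg k n α (extm (m + 1) v) s else 0) = _
  by_cases h : s.card = m
  · rw [dif_pos h]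
  · rw [dif_neg h, Dg_ext_card α m v s h]

variable (k n) in
/-- the contracting homotopy between card-homogeneous levels -/
def Hc (α m : ℕ) : TT k n m → TT k n (m + 1) :=
  fun v => projm (m + 1) (Hg k n α (extm m v))

lemma Hg_ext_card (α m : ℕ) (v : TT k n m) (s : Finset (Fin n)) (h : s.card ≠ m + 1) :
    Hg k n α (extm m v) s = 0 := by
  rw [Hg_apply]
  refine Finset.sum_eq_zero fun j hj => ?_
  have hc : (s.erase j).card ≠ m := by
    rw [Finset.card_erase_of_mem hj]
    have := Finset.card_pos.mpr ⟨j, hj⟩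
    omega
  show sgn j (s.erase j) •
      Phi k n α j (s.erase j) (if h : (s.erase j).card = m then _ else 0) = 0
  rw [dif_neg hc, map_zero, smul_zero]

lemma ext_Hc (α m : ℕ) (v : TT k n m) :
    extm (m + 1) (Hc k n α m v) = Hg k n α (extm m v) := by
  funext s
  show (if h : s.card = m + 1 then Hg k n α (extm m v) s else 0) = _
  by_cases h : s.card = m + 1
  · rw [dif_pos h]
  · rw [dif_neg h, Hg_ext_card α m v s h]

lemma homotopyT (α m : ℕ) (v : TT k n (m + 1)) :
    Dc k n α (m + 1) (Hc k n α (m + 1) v) + Hc k n α m (Dc k n α m v) = v := by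
  apply ext_inj (m := m + 1)
  rw [map_add, ext_Dc, ext_Hc, ext_Hc, ext_Dc]
  exact key_W α m (extm (m + 1) v) fun s h => by
    show (if hc : s.card = m + 1 then _ else 0) = 0
    rw [dif_neg h]

lemma DcDc (α m : ℕ) (w : TT k n (m + 2)) : Dc k n α m (Dc k n α (m + 1) w) = 0 := by
  apply ext_inj (m := m)
  rw [ext_Dc, ext_Dc, Dg_Dg, map_zero]

lemma Hc_zero (α m : ℕ) : Hc k n α m 0 = 0 := by
  unfold Hc
  rw [map_zero, map_zero, map_zero]

lemma exactT (α m : ℕ) : Function.Exact (Dc k n α (m + 1)) (Dc k n α m) := by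
  intro v
  constructor
  · intro h
    refine ⟨Hc k n α (m + 1) v, ?_⟩
    have := homotopyT α m v
    rwa [h, Hc_zero, add_zero] at this
  · rintro ⟨w, rfl⟩
    exact DcDc α m w


variable (k n) in
/-- the augmentation map, scaled by `X none ^ α` -/
def eps (α : ℕ) : TT k n 1 →ₗ[RR k n] RR k n :=
  (LinearMap.mulLeft (RR k n) (X none ^ α)) ∘ₗ
    (LinearMap.proj (⟨∅, Finset.card_empty⟩ : {s : Finset (Fin n) // s.card = 0})) ∘ₗ
      Dc k n α 0

lemma eps_apply (α : ℕ) (v : TT k n 1) :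
    eps k n α v = ∑ j : Fin n,
      (X none * X (some j)) ^ α * v ⟨{j}, Finset.card_singleton j⟩ := by
  show (X none : RR k n) ^ α * Dg k n α (extm 1 v) ∅ = _
  rw [Dg_apply, Finset.mul_sum]
  rw [show (∅ : Finset (Fin n))ᶜ = Finset.univ by simp]
  refine Finset.sum_congr rfl fun j _ => ?_
  have h1 : sgn j (∅ : Finset (Fin n)) = 1 := by
    unfold sgn; simp
  have h2 : insert j (∅ : Finset (Fin n)) = {j} := rfl
  rw [h1, one_smul, h2]
  show (X none : RR k n) ^ α * (X (some j) ^ α *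
      (if h : ({j} : Finset (Fin n)).card = 1 then v ⟨{j}, h⟩ else 0)) = _
  rw [dif_pos (Finset.card_singleton j), mul_pow, mul_assoc]

lemma eps_zero_iff (α : ℕ) (v : TT k n 1) : eps k n α v = 0 ↔ Dc k n α 0 v = 0 := by
  constructor
  · intro h
    funext t
    have ht : t = ⟨∅, Finset.card_empty⟩ := Subtype.ext (Finset.card_eq_zero.mp t.2)
    have hprod : (X none : RR k n) ^ α * Dc k n α 0 v ⟨∅, Finset.card_empty⟩ = 0 := h
    rcases mul_eq_zero.mp hprod with hc | hc
    · exact absurd hc (pow_ne_zero α (X_ne_zero none))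
    · rw [ht]; exact hc
  · intro h
    show (X none : RR k n) ^ α * Dc k n α 0 v ⟨∅, Finset.card_empty⟩ = 0
    rw [h]
    show (X none : RR k n) ^ α * 0 = 0
    rw [mul_zero]

lemma exact_eps (α : ℕ) : Function.Exact (Dc k n α 1) (eps k n α) := by
  intro v
  rw [eps_zero_iff]
  exact exactT α 0 v

lemma eps_range (α : ℕ) :
    LinearMap.range (eps k n α)
      = Ideal.span (Set.range fun j : Fin n => ((X none * X (some j)) ^ α : RR k n)) := by
  apply le_antisymm
  · rintro x ⟨v, rfl⟩
    rw [eps_apply]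
    exact Ideal.sum_mem _ fun j _ =>
      Ideal.mul_mem_right _ _ (Ideal.subset_span ⟨j, rfl⟩)
  · rw [Ideal.span_le]
    rintro x ⟨j, rfl⟩
    refine ⟨Pi.single ⟨{j}, Finset.card_singleton j⟩ 1, ?_⟩
    rw [eps_apply]
    rw [Finset.sum_eq_single_of_mem j (Finset.mem_univ j)]
    · rw [Pi.single_apply, if_pos rfl, mul_one]
    · intro j' _ hne
      rw [Pi.single_apply, if_neg (fun hc => hne (by
        have := Subtype.mk.injEq .. ▸ hc
        exact Finset.singleton_inj.mp (congrArg Subtype.val hc))), mul_zero]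

lemma eps_mem (α : ℕ) (hα : 0 < α) (v : TT k n 1) :
    eps k n α v ∈ Ideal.span (Set.range (X : Option (Fin n) → RR k n)) := by
  obtain ⟨β, rfl⟩ : ∃ β, α = β + 1 := ⟨α - 1, (Nat.succ_pred_eq_of_pos hα).symm⟩
  rw [eps_apply]
  refine Ideal.sum_mem _ fun j _ => ?_
  refine Ideal.mul_mem_right _ _ ?_
  rw [pow_succ]
  exact Ideal.mul_mem_left _ _
    (Ideal.mul_mem_right _ _ (Ideal.subset_span ⟨none, rfl⟩))

lemma Dc_mem (α : ℕ) (hα : 0 < α) (m : ℕ) (v : TT k n (m + 1))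
    (t : {s : Finset (Fin n) // s.card = m}) :
    Dc k n α m v t ∈ Ideal.span (Set.range (X : Option (Fin n) → RR k n)) := by
  obtain ⟨β, rfl⟩ : ∃ β, α = β + 1 := ⟨α - 1, (Nat.succ_pred_eq_of_pos hα).symm⟩
  show Dg k n (β + 1) (extm (m + 1) v) t.1 ∈ _
  rw [Dg_apply]
  refine Ideal.sum_mem _ fun j _ => ?_
  rw [zsmul_eq_mul]
  refine Ideal.mul_mem_left _ _ ?_
  rw [pow_succ, mul_assoc]
  exact Ideal.mul_mem_left _ _
    (Ideal.mul_mem_right _ _ (Ideal.subset_span ⟨some j, rfl⟩))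


lemma exact_conj {R : Type*} [CommRing R]
    {M₁ M₂ M₃ N₁ N₂ N₃ : Type*}
    [AddCommGroup M₁] [AddCommGroup M₂] [AddCommGroup M₃]
    [AddCommGroup N₁] [AddCommGroup N₂] [AddCommGroup N₃]
    [Module R M₁] [Module R M₂] [Module R M₃]
    [Module R N₁] [Module R N₂] [Module R N₃]
    (f : M₁ →ₗ[R] M₂) (g : M₂ →ₗ[R] M₃)
    (e₁ : N₁ ≃ₗ[R] M₁) (e₂ : M₂ ≃ₗ[R] N₂) (e₃ : M₃ ≃ₗ[R] N₃)
    (h : Function.Exact f g) :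
    Function.Exact (e₂.toLinearMap ∘ₗ f ∘ₗ e₁.toLinearMap)
      (e₃.toLinearMap ∘ₗ g ∘ₗ e₂.symm.toLinearMap) := by
  intro y
  simp only [LinearMap.coe_comp, Function.comp_apply, LinearEquiv.coe_coe]
  constructor
  · intro h0
    have hg : g (e₂.symm y) = 0 := by
      have := congrArg e₃.symm h0
      rwa [e₃.symm_apply_apply, map_zero] at this
    obtain ⟨x, hx⟩ := (h _).mp hg
    refine ⟨e₁.symm x, ?_⟩
    show e₂ (f (e₁ (e₁.symm x))) = y
    rw [e₁.apply_symm_apply, hx, e₂.apply_symm_apply]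
  · rintro ⟨x, rfl⟩
    show e₃ (g (e₂.symm ((⇑e₂ ∘ ⇑f ∘ ⇑e₁) x))) = 0
    simp only [Function.comp_apply]
    rw [e₂.symm_apply_apply]
    have hz : g (f (e₁ x)) = 0 := (h _).mpr ⟨e₁ x, rfl⟩
    rw [hz, map_zero]


end StarPD

end StarPDAux

open StarPD in
/-- `(X^αY₁^α,…,X^αY_n^α) = X^α·(Y₁^α,…,Y_n^α)`, and `S/(X^αY₁^α,…,X^αY_n^α)` has projective
dimension `n` over `S = k[X,Y₁,…,Y_n]`. -/
theorem star_ideal_pd (k : Type) [Field k] (n α : ℕ) (hα : 0 < α) :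
    Ideal.span (Set.range fun j : Fin n =>
        (X none * X (some j) : MvPolynomial (Option (Fin n)) k) ^ α)
      = Ideal.span {(X none : MvPolynomial (Option (Fin n)) k) ^ α} *
          Ideal.span (Set.range fun j : Fin n =>
            (X (some j) : MvPolynomial (Option (Fin n)) k) ^ α) ∧
    ∃ b : ℕ → ℕ,
      MinimalFreeRes (Ideal.span (Set.range fun j : Fin n =>
        (X none * X (some j) : MvPolynomial (Option (Fin n)) k) ^ α)) b ∧
      b n ≠ 0 ∧ ∀ i, n < i → b i = 0 := by

  constructor
  · rw [Ideal.span_mul_span']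
    congr 1
    ext x
    simp only [Set.mem_mul, Set.mem_singleton_iff, Set.mem_range]
    constructor
    · rintro ⟨j, rfl⟩
      exact ⟨_, rfl, _, ⟨j, rfl⟩, (mul_pow _ _ _).symm⟩
    · rintro ⟨y, rfl, z, ⟨j, rfl⟩, rfl⟩
      exact ⟨j, mul_pow _ _ _⟩
  · have hcard : ∀ i, Fintype.card {s : Finset (Fin n) // s.card = i} = n.choose i := fun i => by
      rw [Fintype.card_finset_len, Fintype.card_fin]
    let E : (i : ℕ) → (Fin (n.choose i) ≃ {s : Finset (Fin n) // s.card = i}) :=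
      fun i => (Fintype.equivFinOfCardEq (hcard i)).symm
    let Lq : (i : ℕ) → (TT k n i ≃ₗ[RR k n] (Fin (n.choose i) → RR k n)) :=
      fun i => LinearEquiv.funCongrLeft _ _ (E i)
    refine ⟨fun i => n.choose i, ⟨Nat.choose_zero_right n,
      eps k n α ∘ₗ (Lq 1).symm.toLinearMap,
      fun i => (Lq (i+1)).toLinearMap ∘ₗ Dc k n α (i+1) ∘ₗ (Lq (i+2)).symm.toLinearMap,
      ?hr, ?he0, ?hei, ?hm1, ?hm2⟩, ?hbn, ?hbi⟩
    case hr =>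
      rw [LinearMap.range_comp_of_range_eq_top (eps k n α) (LinearEquiv.range (Lq 1).symm)]
      exact eps_range α
    case he0 =>
      exact (exact_conj (Dc k n α 1) (eps k n α) (Lq 2).symm (Lq 1)
        (LinearEquiv.refl _ _) (exact_eps α) : _)
    case hei =>
      intro i
      exact exact_conj (Dc k n α (i+2)) (Dc k n α (i+1)) (Lq (i+3)).symm (Lq (i+2)) (Lq (i+1))
        (exactT α (i+1))
    case hm1 =>
      intro v
      exact eps_mem α hα _
    case hm2 =>
      intro i v j
      exact Dc_mem α hα (i+1) _ _
    case hbn => simp [Nat.choose_self]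
    case hbi =>
      intro i hi
      exact Nat.choose_eq_zero_of_lt hi
end

section
/- Let m,n ≥ 2 and ω an edge-weighting of K_{m,n} with minimum weight α. If for every edge vw with ω(vw) = α there exist edges at v and at w with weight strictly greater than α, then there is a monomial f in S such that exactly two of the mn generators (X_iY_j)^{ω(i,j)} divide f, and these two generators share no common X-variable and no common Y-variable (their indices differ in both coordinates). -/
open MvPolynomial

/-- If `m, n ≥ 2` and for every edge `vw` of minimal weight `α` there are strictly heavier edges
at both `v` and `w`, then there is a monomial `f` divisible by exactly two of the generators
`(X_iY_j)^{ω(i,j)}`, and these two generators differ in both coordinates. -/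
theorem disconnecting_monomial (k : Type) [Field k] (m n : ℕ) (hm : 2 ≤ m) (hn : 2 ≤ n)
    (ω : Fin m → Fin n → ℕ) (hω : ∀ i j, 0 < ω i j) (α : ℕ)
    (hmin : ∀ i j, α ≤ ω i j) (hex : ∃ i j, ω i j = α)
    (hcond : ∀ i j, ω i j = α → (∃ j', α < ω i j') ∧ (∃ i', α < ω i' j)) :
    ∃ e : (Fin m ⊕ Fin n) →₀ ℕ, ∃ p₁ p₂ : Fin m × Fin n,
      p₁.1 ≠ p₂.1 ∧ p₁.2 ≠ p₂.2 ∧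
      {p : Fin m × Fin n |
          ((X (Sum.inl p.1) * X (Sum.inr p.2) : MvPolynomial (Fin m ⊕ Fin n) k) ^ ω p.1 p.2) ∣
            MvPolynomial.monomial e (1 : k)}
        = {p₁, p₂} := by
  obtain ⟨i₀, j₀, h0⟩ := hex
  obtain ⟨⟨j', hj'⟩, ⟨i', hi'⟩⟩ := hcond i₀ j₀ h0
  have hii : i₀ ≠ i' := by rintro rfl; omega
  have hjj : j₀ ≠ j' := by rintro rfl; omega
  refine ⟨Finsupp.single (Sum.inl i₀) α + Finsupp.single (Sum.inr j₀) α
      + Finsupp.single (Sum.inl i') (ω i' j') + Finsupp.single (Sum.inr j') (ω i' j'),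
    (i₀, j₀), (i', j'), hii, hjj, ?_⟩
  ext ⟨i, j⟩
  simp only [Set.mem_setOf_eq, Set.mem_insert_iff, Set.mem_singleton_iff, Prod.mk.injEq]
  rw [mul_pow, X_pow_eq_monomial, X_pow_eq_monomial, monomial_mul, one_mul,
    monomial_dvd_monomial]
  simp only [one_ne_zero, false_or, isUnit_one, IsUnit.dvd, and_true, Finsupp.le_def]
  constructor
  · intro h
    have h1 := h (Sum.inl i)
    have h2 := h (Sum.inr j)
    have hp := hω i j
    have hm1 := hmin i₀ j
    have hm2 := hmin i j₀
    simp [Finsupp.single_apply] at h1 h2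
    split_ifs at h1 h2 <;> subst_vars <;> omega
  · rintro (⟨rfl, rfl⟩ | ⟨rfl, rfl⟩) s <;>
      rcases s with a | b <;>
      · simp only [Finsupp.add_apply, Finsupp.single_apply, Sum.inl.injEq, Sum.inr.injEq,
          reduceCtorEq, if_false]
        split_ifs <;> simp_all <;> omega
end

section
/- Let S = k[X_1,X_2,Y_1,Y_2] and positive integers α ≤ γ, α ≤ δ. Set f_1 = X_1^αY_1^α, f_2 = X_1^αY_2^α, f_3 = X_2^γY_1^γ, f_4 = X_2^δY_2^δ. Then for every monomial g ∈ S: if f_1 | g and f_4 | g then f_2 | g; and if f_2 | g and f_3 | g then f_1 | g. -/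
open MvPolynomial

/-- With `α ≤ γ`, `α ≤ δ` and generators `f₁ = X₁^αY₁^α`, `f₂ = X₁^αY₂^α`, `f₃ = X₂^γY₁^γ`,
`f₄ = X₂^δY₂^δ`, for every monomial `g`: if `f₁ ∣ g` and `f₄ ∣ g` then `f₂ ∣ g`, and if
`f₂ ∣ g` and `f₃ ∣ g` then `f₁ ∣ g`. -/
theorem diagonal_divisibility (k : Type) [Field k] (α γ δ : ℕ)
    (hα : 0 < α) (hγ : α ≤ γ) (hδ : α ≤ δ) (e : (Fin 2 ⊕ Fin 2) →₀ ℕ) :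
    let x1 : MvPolynomial (Fin 2 ⊕ Fin 2) k := X (Sum.inl 0)
    let x2 : MvPolynomial (Fin 2 ⊕ Fin 2) k := X (Sum.inl 1)
    let y1 : MvPolynomial (Fin 2 ⊕ Fin 2) k := X (Sum.inr 0)
    let y2 : MvPolynomial (Fin 2 ⊕ Fin 2) k := X (Sum.inr 1)
    let g : MvPolynomial (Fin 2 ⊕ Fin 2) k := MvPolynomial.monomial e 1
    (x1 ^ α * y1 ^ α ∣ g → x2 ^ δ * y2 ^ δ ∣ g → x1 ^ α * y2 ^ α ∣ g) ∧
      (x1 ^ α * y2 ^ α ∣ g → x2 ^ γ * y1 ^ γ ∣ g → x1 ^ α * y1 ^ α ∣ g) := by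
  intro x1 x2 y1 y2 g
  simp only [x1, x2, y1, y2, g, X_pow_eq_monomial, monomial_mul, one_mul,
    monomial_one_dvd_monomial_one, Finsupp.le_def, Finsupp.add_apply, Finsupp.single_apply]
  constructor
  · intro h1 h4 i
    have a := h1 (Sum.inl 0); have b := h4 (Sum.inr 1)
    rcases i with (i | i) <;> fin_cases i <;> simp_all <;> omega
  · intro h2 h3 i
    have a := h2 (Sum.inl 0); have b := h3 (Sum.inr 0)
    rcases i with (i | i) <;> fin_cases i <;> simp_all <;> omega
end

section
/- With notation as above, for all nonempty A ⊆ [m], B ⊆ [n] with |A| ≥ 2 and any a ∈ A, the variable X_a divides the quotient f_{A,B}/f_{A−{a},B}; similarly for |B| ≥ 2 and b ∈ B, the variable Y_b divides f_{A,B}/f_{A,B−{b}}. In particular no such quotient is a unit. -/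
/-- For `|A| ≥ 2` and `a ∈ A`, the variable `X_a` divides the quotient `f_{A,B}/f_{A∖{a},B}` of
cell labels of Visscher's weighted complex (expressed via exponent vectors: the exponent vector
of `f_{A∖{a},B}` is pointwise at most that of `f_{A,B}`, and is strictly smaller at `X_a`);
similarly for `Y_b`.  In particular no such quotient is a unit, so the complex is minimal. -/
theorem label_quotient_nonunit (m n : ℕ) (ω : Fin m → Fin n → ℕ) (hω : ∀ i j, 0 < ω i j) :
    let expo : Fin m × Fin n → (Fin m ⊕ Fin n → ℕ) := fun p v =>
      match v with
      | Sum.inl a => if a = p.1 then ω p.1 p.2 else 0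
      | Sum.inr b => if b = p.2 then ω p.1 p.2 else 0
    let L : Finset (Fin m) → Finset (Fin n) → (Fin m ⊕ Fin n → ℕ) := fun A B =>
      (A ×ˢ B).sup expo
    (∀ (A : Finset (Fin m)) (B : Finset (Fin n)) (a : Fin m), a ∈ A → 2 ≤ A.card →
      B.Nonempty →
      (∀ v, L (A.erase a) B v ≤ L A B v) ∧
        L (A.erase a) B (Sum.inl a) + 1 ≤ L A B (Sum.inl a)) ∧
    (∀ (A : Finset (Fin m)) (B : Finset (Fin n)) (b : Fin n), b ∈ B → 2 ≤ B.card →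
      A.Nonempty →
      (∀ v, L A (B.erase b) v ≤ L A B v) ∧
        L A (B.erase b) (Sum.inr b) + 1 ≤ L A B (Sum.inr b)) := by
  intro expo L
  have mono : ∀ (A A' : Finset (Fin m)) (B B' : Finset (Fin n)), A' ⊆ A → B' ⊆ B →
      ∀ v, L A' B' v ≤ L A B v := by
    intro A A' B B' hA hB v
    have : (A' ×ˢ B') ⊆ (A ×ˢ B) := Finset.product_subset_product hA hB
    exact (Finset.sup_mono this : L A' B' ≤ L A B) v
  constructor
  · intro A B a ha _ hB
    refine ⟨fun v => mono _ _ _ _ (Finset.erase_subset _ _) le_rfl v, ?_⟩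
    have h0 : L (A.erase a) B (Sum.inl a) = 0 := by
      rw [show L (A.erase a) B (Sum.inl a) = ((A.erase a) ×ˢ B).sup (fun p => expo p (Sum.inl a))
        from Finset.sup_apply _ _ _]
      apply Nat.le_zero.mp
      apply Finset.sup_le
      intro p hp
      rw [Finset.mem_product] at hp
      have : ¬ a = p.1 := fun h => (Finset.mem_erase.mp hp.1).1 h.symm
      simp [expo, this]
    obtain ⟨b, hb⟩ := hB
    have h1 : expo (a, b) (Sum.inl a) ≤ L A B (Sum.inl a) :=
      Finset.le_sup (f := expo) (Finset.mem_product.mpr ⟨ha, hb⟩) (Sum.inl a)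
    simp [expo] at h1
    have h2 := hω a b
    omega
  · intro A B b hb _ hA
    refine ⟨fun v => mono _ _ _ _ le_rfl (Finset.erase_subset _ _) v, ?_⟩
    have h0 : L A (B.erase b) (Sum.inr b) = 0 := by
      rw [show L A (B.erase b) (Sum.inr b) = (A ×ˢ (B.erase b)).sup (fun p => expo p (Sum.inr b))
        from Finset.sup_apply _ _ _]
      apply Nat.le_zero.mp
      apply Finset.sup_le
      intro p hp
      rw [Finset.mem_product] at hp
      have : ¬ b = p.2 := fun h => (Finset.mem_erase.mp hp.2).1 h.symm
      simp [expo, this]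
    obtain ⟨a, ha⟩ := hA
    have h1 : expo (a, b) (Sum.inr b) ≤ L A B (Sum.inr b) :=
      Finset.le_sup (f := expo) (Finset.mem_product.mpr ⟨ha, hb⟩) (Sum.inr b)
    simp [expo] at h1
    have h2 := hω a b
    omega
end
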